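/- (Correctness of the recursive step of Kalman-LUK) Let A ∈ M_n(F), B ∈ M_{n×m}(F), and v the first column of B with minimal polynomial (relative to A) of degree r₁ < n. Let W₁ = Span(v, Av, ..., A^{r₁−1}v), and let A_R be the matrix of the induced map on F^n/W₁ (in a basis completing a basis of W₁), Z the induced image of the remaining columns of B in F^n/W₁. Then dim Span(B, AB, ..., A^{n−1}B) = r₁ + dim Span(Z, A_R Z, ..., A_R^{n−r₁−1} Z). -/

import Mathlib

/-!
Since `r₁ < n`, the cyclic space `W₁` lies in the controllable space
`V = Span(B, AB, …, A^{n-1}B)`, so `dim V = r₁ + dim (V / W₁)`. The image of `V` in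
`F^n / W₁` is the span of `A_R^k Z` for `k < n`. By Cayley–Hamilton every power of `A_R` is a
combination of the powers below `dim (F^n / W₁) = n - r₁`, so `k < n - r₁` already gives the
same span.
-/

open Matrix Submodule Module Polynomial

theorem Module.End.pow_mem_span_pow_lt_finrank {R M : Type*} [CommRing R] [Nontrivial R]
    [AddCommGroup M] [Module R M] [Module.Free R M] [Module.Finite R M]
    (f : Module.End R M) (k : ℕ) :
    f ^ k ∈ span R ((f ^ ·) '' Set.Iio (finrank R M)) := by
  classical
  -- `f ^ k = aeval f (X ^ k %ₘ χ_f)`, and the remainder has degree below `finrank R M`.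
  have hdeg : (X ^ k %ₘ f.charpoly).degree < finrank R M := by
    rw [← f.charpoly_natDegree, ← degree_eq_natDegree f.charpoly_monic.ne_zero]
    exact degree_modByMonic_lt _ f.charpoly_monic
  have hmem := Submodule.mem_map_of_mem (f := (aeval f).toLinearMap) (mem_degreeLT.2 hdeg)
  rw [degreeLT_eq_span_X_pow, Submodule.map_span, AlgHom.toLinearMap_apply,
    aeval_modByMonic_eq_self_of_root f.aeval_self_charpoly, map_pow, aeval_X,
    Finset.coe_image, ← Set.image_comp, Finset.coe_range, Function.comp_def] at hmem
  simpa using hmem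

theorem Submodule.finrank_map_mkQ_add_finrank_of_le {K M : Type*} [DivisionRing K]
    [AddCommGroup M] [Module K M] [FiniteDimensional K M] {W V : Submodule K M} (hWV : W ≤ V) :
    finrank K (V.map W.mkQ) + finrank K W = finrank K V := by
  have h := (W.mkQ.domRestrict V).finrank_range_add_finrank_ker
  rwa [LinearMap.range_domRestrict, LinearMap.ker_domRestrict, ker_mkQ,
    (comapSubtypeEquivOfLe hWV).finrank_eq] at h

section Krylov

variable {R M M₂ ι : Type*} [CommRing R] [AddCommGroup M] [Module R M]
  [AddCommGroup M₂] [Module R M₂]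

def krylovSpan (f : Module.End R M) (z : ι → M) (N : ℕ) : Submodule R M :=
  span R {y | ∃ k < N, ∃ j, y = (f ^ k) (z j)}

variable (f : Module.End R M) (z : ι → M)

theorem krylovSpan_mono {N N' : ℕ} (h : N ≤ N') : krylovSpan f z N ≤ krylovSpan f z N' :=
  span_mono fun _ ⟨k, hk, j, hy⟩ => ⟨k, hk.trans_le h, j, hy⟩

theorem pow_apply_mem_krylovSpan_finrank [Nontrivial R] [Module.Free R M] [Module.Finite R M]
    (k : ℕ) (j : ι) : (f ^ k) (z j) ∈ krylovSpan f z (finrank R M) := by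
  have hmem := Submodule.mem_map_of_mem (f := LinearMap.applyₗ (z j))
    (f.pow_mem_span_pow_lt_finrank k)
  rw [Submodule.map_span, ← Set.image_comp] at hmem
  refine span_mono ?_ hmem
  rintro _ ⟨i, hi, rfl⟩
  exact ⟨i, hi, j, rfl⟩

theorem krylovSpan_eq_of_finrank_le [Nontrivial R] [Module.Free R M] [Module.Finite R M]
    {N : ℕ} (h : finrank R M ≤ N) : krylovSpan f z N = krylovSpan f z (finrank R M) :=
  le_antisymm (span_le.2 fun _ ⟨k, _, j, hy⟩ => hy ▸ pow_apply_mem_krylovSpan_finrank f z k j)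
    (krylovSpan_mono f z h)

theorem map_krylovSpan {f₂ : Module.End R M₂} {g : M →ₗ[R] M₂} (h : f₂ ∘ₗ g = g ∘ₗ f) (N : ℕ) :
    (krylovSpan f z N).map g = krylovSpan f₂ (g ∘ z) N := by
  have hpow (k : ℕ) (x : M) : g ((f ^ k) x) = (f₂ ^ k) (g x) :=
    (LinearMap.congr_fun (Module.End.commute_pow_left_of_commute h k) x).symm
  rw [krylovSpan, krylovSpan, map_span]
  congr 1
  ext y
  simp [hpow, eq_comm]

end Krylov

theorem stmt18_general {F : Type*} [Field F] {n m r₁ : ℕ} (A : Matrix (Fin n) (Fin n) F)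
    (B : Matrix (Fin n) (Fin m) F) (hm : 0 < m)
    (v : Fin n → F) (hv : v = fun i => B i ⟨0, hm⟩)
    (hind : LinearIndependent F (fun k : Fin r₁ => (A ^ (k : ℕ)) *ᵥ v))
    (hr₁ : r₁ < n)
    (W₁ : Submodule F (Fin n → F))
    (hW₁ : W₁ = span F (Set.range fun k : Fin r₁ => (A ^ (k : ℕ)) *ᵥ v))
    (AR : Module.End F ((Fin n → F) ⧸ W₁))
    (hAR : ∀ x : Fin n → F, AR (Submodule.Quotient.mk x) =
      Submodule.Quotient.mk (A *ᵥ x)) :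
    Module.finrank F
      (span F {x | ∃ k < n, ∃ j : Fin m, x = (A ^ k) *ᵥ (fun i => B i j)}) =
    r₁ + Module.finrank F
      (span F {y : (Fin n → F) ⧸ W₁ | ∃ k < n - r₁, ∃ j : Fin m,
        y = (AR ^ k) (Submodule.Quotient.mk (fun i => B i j))}) := by
  set b : Fin m → Fin n → F := fun j i => B i j
  have hK : span F {x | ∃ k < n, ∃ j : Fin m, x = (A ^ k) *ᵥ b j} =
      krylovSpan (Matrix.toLin' A) b n := by
    simp only [krylovSpan, ← Matrix.toLin'_pow, Matrix.toLin'_apply]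
  have hcomm : AR ∘ₗ W₁.mkQ = W₁.mkQ ∘ₗ Matrix.toLin' A := LinearMap.ext hAR
  have hdimW : finrank F W₁ = r₁ := by
    rw [hW₁, finrank_span_eq_card hind, Fintype.card_fin]
  have hWK : W₁ ≤ krylovSpan (Matrix.toLin' A) b n := by
    rw [hW₁, ← hK, span_le]
    rintro _ ⟨k, rfl⟩
    exact subset_span ⟨k, k.2.trans hr₁, ⟨0, hm⟩, by rw [hv]⟩
  have hdimQ : finrank F ((Fin n → F) ⧸ W₁) = n - r₁ := by
    have := W₁.finrank_quotient_add_finrank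
    rw [hdimW, Module.finrank_fin_fun] at this
    omega
  change finrank F (span F {x | ∃ k < n, ∃ j : Fin m, x = (A ^ k) *ᵥ b j}) =
    r₁ + finrank F (krylovSpan AR (W₁.mkQ ∘ b) (n - r₁))
  rw [hK]
  calc finrank F (krylovSpan (Matrix.toLin' A) b n)
      = r₁ + finrank F ((krylovSpan (Matrix.toLin' A) b n).map W₁.mkQ) := by
        rw [← finrank_map_mkQ_add_finrank_of_le hWK, hdimW, add_comm]
    _ = r₁ + finrank F (krylovSpan AR (W₁.mkQ ∘ b) n) := by rw [map_krylovSpan _ _ hcomm]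
    _ = r₁ + finrank F (krylovSpan AR (W₁.mkQ ∘ b) (n - r₁)) := by
        rw [krylovSpan_eq_of_finrank_le _ _ (by omega), hdimQ]

/-- Correctness of the recursive step of Kalman-LUK: the dimension of the controllable
subspace of `(A, B)` equals `r₁` plus the dimension of the controllable subspace of the
induced pair `(A_R, Z)` on the quotient by the cyclic subspace `W₁` generated by the
first column `v` of `B`. -/
theorem stmt18 {F : Type*} [Field F] {n m r₁ : ℕ} (A : Matrix (Fin n) (Fin n) F)
    (B : Matrix (Fin n) (Fin m) F) (hm : 0 < m)
    (v : Fin n → F) (hv : v = fun i => B i ⟨0, hm⟩) (hvne : v ≠ 0)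
    (hind : LinearIndependent F (fun k : Fin r₁ => (A ^ (k : ℕ)) *ᵥ v))
    (hdep : (A ^ r₁) *ᵥ v ∈ span F (Set.range fun k : Fin r₁ => (A ^ (k : ℕ)) *ᵥ v))
    (hr₁ : r₁ < n)
    (W₁ : Submodule F (Fin n → F))
    (hW₁ : W₁ = span F (Set.range fun k : Fin r₁ => (A ^ (k : ℕ)) *ᵥ v))
    (hinv : ∀ x ∈ W₁, A *ᵥ x ∈ W₁)
    (AR : Module.End F ((Fin n → F) ⧸ W₁))
    (hAR : ∀ x : Fin n → F, AR (Submodule.Quotient.mk x) =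
      Submodule.Quotient.mk (A *ᵥ x)) :
    Module.finrank F
      (span F {x | ∃ k < n, ∃ j : Fin m, x = (A ^ k) *ᵥ (fun i => B i j)}) =
    r₁ + Module.finrank F
      (span F {y : (Fin n → F) ⧸ W₁ | ∃ k < n - r₁, ∃ j : Fin m,
        y = (AR ^ k) (Submodule.Quotient.mk (fun i => B i j))}) :=
  stmt18_general A B hm v hv hind hr₁ W₁ hW₁ AR hAR
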